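/- Let Y be a finite multiset of natural numbers all of which are ≥ 1. Set d = Σ_{y ∈ Y} y, let ℓ₀ be the number of elements y of Y (with multiplicity) such that 5 does not divide y, let A = Σ_{y ∈ Y} (⌊3y/5⌋ − ⌊2y/5⌋), and let B = Σ_{y ∈ Y} (⌊2y/5⌋ − ⌊y/5⌋). Then d + ℓ₀ = A + 2B + 4 if and only if either (1) Y has exactly two elements y₁, y₂ with 1 ≤ y₁, y₂ ≤ 5, or (2) Y has exactly one element y₁ with 6 ≤ y₁ ≤ 10. Equivalently, the multisets satisfying the condition are exactly the twenty partitions [1,1], [1,2], [1,3], [1,4], [1,5], [2,2], [2,3], [2,4], [2,5], [3,3], [3,4], [3,5], [4,4], [4,5], [5,5], [6], [7], [8], [9], [10]. -/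

import Mathlib

/-!
Writing `⌈y/5⌉ = (y + 4) / 5`, every `y` satisfies
`y + [5 ∤ y] = (⌊3y/5⌋ - ⌊2y/5⌋) + 2 (⌊2y/5⌋ - ⌊y/5⌋) + 2 ⌈y/5⌉`,
as one checks on the residues of `y` modulo `5`. Summing over `Y`, the condition
`d + ℓ₀ = A + 2B + 4` becomes `Σ ⌈y/5⌉ = 2`. Since every `y ≥ 1` has `⌈y/5⌉ ≥ 1`, this forces
either two parts with `⌈y/5⌉ = 1`, i.e. `1 ≤ y ≤ 5`, or one part with `⌈y/5⌉ = 2`, i.e.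
`6 ≤ y ≤ 10`.
-/

theorem add_ite_not_dvd_five_eq (y : ℕ) :
    y + (if ¬ 5 ∣ y then 1 else 0)
      = (3 * y / 5 - 2 * y / 5) + 2 * (2 * y / 5 - y / 5) + 2 * ((y + 4) / 5) := by
  have := Nat.mod_lt y (by norm_num : 5 > 0)
  split_ifs <;> interval_cases h : y % 5 <;> omega

theorem sum_add_card_filter_not_dvd_five (Y : Multiset ℕ) :
    Y.sum + (Y.filter (fun y => ¬ 5 ∣ y)).card
      = (Y.map (fun y => 3 * y / 5 - 2 * y / 5)).sum
        + 2 * (Y.map (fun y => 2 * y / 5 - y / 5)).sum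
        + 2 * (Y.map (fun y => (y + 4) / 5)).sum := by
  induction Y using Multiset.induction with
  | empty => simp
  | cons a s ih =>
    rw [← Multiset.countP_eq_card_filter] at ih ⊢
    simp only [Multiset.countP_cons, Multiset.sum_cons, Multiset.map_cons]
    have := add_ite_not_dvd_five_eq a
    omega

namespace Multiset

theorem sum_map_eq_two_iff {α : Type*} {s : Multiset α} {g : α → ℕ} (hg : ∀ a ∈ s, 0 < g a) :
    (s.map g).sum = 2 ↔
      (∃ a b, s = {a, b} ∧ g a = 1 ∧ g b = 1) ∨ (∃ a, s = {a} ∧ g a = 2) := by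
  constructor
  · intro h
    have hcard : card s ≤ 2 := by
      simpa [h] using card_nsmul_le_sum (s := s.map g) (a := 1) (forall_mem_map_iff.2 hg)
    interval_cases hs : card s
    · simp [card_eq_zero.mp hs] at h
    · obtain ⟨a, rfl⟩ := card_eq_one.mp hs
      exact .inr ⟨a, rfl, by simpa using h⟩
    · obtain ⟨a, b, rfl⟩ := card_eq_two.mp hs
      have ha := hg a (by simp)
      have hb := hg b (by simp)
      simp only [insert_eq_cons, map_cons, map_singleton, sum_cons, sum_singleton] at h
      exact .inl ⟨a, b, rfl, by omega, by omega⟩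
  · rintro (⟨a, b, rfl, ha, hb⟩ | ⟨a, rfl, ha⟩) <;> simp [insert_eq_cons, *]

end Multiset

/-- Calabi–Yau condition for base changes of the mirror quintic family: for a ramification
profile `Y` over `∞` (a multiset of positive integers), with `d = Σ y`, `ℓ₀` the number of
elements not divisible by `5`, `A = Σ (⌊3y/5⌋ - ⌊2y/5⌋)` and `B = Σ (⌊2y/5⌋ - ⌊y/5⌋)`,
one has `d + ℓ₀ = A + 2B + 4` if and only if either `Y = [y₁, y₂]` with `1 ≤ y₁, y₂ ≤ 5`,
or `Y = [y₁]` with `6 ≤ y₁ ≤ 10`. -/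
theorem mirror_quintic_CY_condition (Y : Multiset ℕ) (hY : ∀ y ∈ Y, 1 ≤ y) :
    Y.sum + (Y.filter (fun y => ¬ (5 ∣ y))).card
      = (Y.map (fun y => 3 * y / 5 - 2 * y / 5)).sum
        + 2 * (Y.map (fun y => 2 * y / 5 - y / 5)).sum + 4 ↔
      (∃ y₁ y₂ : ℕ, Y = {y₁, y₂} ∧ 1 ≤ y₁ ∧ y₁ ≤ 5 ∧ 1 ≤ y₂ ∧ y₂ ≤ 5) ∨
      (∃ y₁ : ℕ, Y = {y₁} ∧ 6 ≤ y₁ ∧ y₁ ≤ 10) := by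
  have hceil_pos : ∀ y ∈ Y, 0 < (y + 4) / 5 := fun y hy => by have := hY y hy; omega
  have hceil_one (y : ℕ) : (y + 4) / 5 = 1 ↔ 1 ≤ y ∧ y ≤ 5 := by omega
  have hceil_two (y : ℕ) : (y + 4) / 5 = 2 ↔ 6 ≤ y ∧ y ≤ 10 := by omega
  have hprofiles := Multiset.sum_map_eq_two_iff hceil_pos
  simp only [hceil_one, hceil_two, and_assoc] at hprofiles
  rw [← hprofiles]
  have := sum_add_card_filter_not_dvd_five Y
  omega
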